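/- arXiv:2510.19744 — 2 statements merged into one kernel-verified Lean document; each statement's English description precedes it below -/
import Mathlib

section
/- Let A be a Boolean algebra and (μ_n) an anti-Nikodym sequence of measures on A with a unique Nikodym concentration point t in the Stone space of A. Then t is a strong Nikodym concentration point of (μ_n): for every N ∈ ω and every A ∈ t there exist a clopen set U contained in the clopen set of A but with t ∉ U, and n ∈ ω, such that |μ̂_n(U)| > N·(‖μ_n ↾ Aᶜ‖ + 1), where μ̂_n is the Radon extension of μ_n to the Stone space. -/
/-!
Away from `t` every point of the Stone space has a clopen neighbourhood on which the variations
of the `μ n` are uniformly bounded, so by compactness `‖μ n ↾ aᶜ‖ ≤ C` for all `n`. Since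
`μ n a → 0` while `sup_n ‖μ n ↾ a‖ = ∞`, for some `n` there is `d ≤ a` with `|μ n d|` huge and
`|μ n a| < 1`. Then `d` and `a ⊓ dᶜ` both carry huge measure, and `t` lies in at most one of them.
-/

open Filter
open scoped ENNReal

variable {α : Type*}

/-- Finite additivity of a real-valued set function on a Boolean algebra. -/
def FinAdd [BooleanAlgebra α] (μ : α → ℝ) : Prop :=
  ∀ a b : α, a ⊓ b = ⊥ → μ (a ⊔ b) = μ a + μ b

/-- The variation of `μ` over the subfamily `s`:
`sup {|μ a| + |μ b| : a, b ∈ s, a ⊓ b = ⊥}`, computed in `ℝ≥0∞`. -/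
noncomputable def svar [BooleanAlgebra α] (μ : α → ℝ) (s : Set α) : ℝ≥0∞ :=
  ⨆ p : {p : α × α // p.1 ∈ s ∧ p.2 ∈ s ∧ p.1 ⊓ p.2 = ⊥},
    ENNReal.ofReal (|μ p.1.1| + |μ p.1.2|)

/-- The variation norm of the restriction `μ ↾ a`, i.e. `|μ|(a)`. -/
noncomputable def bvar [BooleanAlgebra α] (μ : α → ℝ) (a : α) : ℝ≥0∞ :=
  svar μ (Set.Iic a)

/-- `t` is an ultrafilter on the Boolean algebra `α`. -/
structure IsUltrafilterSet [BooleanAlgebra α] (t : Set α) : Prop where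
  top_mem : ⊤ ∈ t
  bot_not_mem : ⊥ ∉ t
  mem_of_le : ∀ ⦃a b : α⦄, a ∈ t → a ≤ b → b ∈ t
  inf_mem : ∀ ⦃a b : α⦄, a ∈ t → b ∈ t → a ⊓ b ∈ t
open MeasureTheory

/-- A representation of the Boolean algebra `α` by the clopen subsets of its Stone space `S`. -/
structure StoneRep (α S : Type*) [BooleanAlgebra α] [TopologicalSpace S] where
  e : α → Set S
  isClopen : ∀ a, IsClopen (e a)
  map_bot : e ⊥ = ∅
  map_top : e ⊤ = Set.univ
  map_sup : ∀ a b, e (a ⊔ b) = e a ∪ e b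
  map_inf : ∀ a b, e (a ⊓ b) = e a ∩ e b
  map_compl : ∀ a, e aᶜ = (e a)ᶜ
  injective : Function.Injective e
  surj_clopen : ∀ U : Set S, IsClopen U → ∃ a, e a = U

section BooleanAlgebra

variable [BooleanAlgebra α] {μ : α → ℝ}

lemma FinAdd.map_bot (h : FinAdd μ) : μ ⊥ = 0 := by
  have := h ⊥ ⊥ (by simp)
  simp only [sup_idem] at this
  linarith

lemma FinAdd.apply_eq_add_inf_compl (h : FinAdd μ) (p b : α) :
    μ p = μ (p ⊓ b) + μ (p ⊓ bᶜ) := by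
  have hdisj : (p ⊓ b) ⊓ (p ⊓ bᶜ) = ⊥ :=
    (disjoint_compl_right.mono inf_le_right inf_le_right).eq_bot
  rw [← h _ _ hdisj, sup_inf_inf_compl]

lemma FinAdd.abs_sub_abs_le_abs_inf_compl (h : FinAdd μ) {a d : α} (hda : d ≤ a) :
    |μ d| - |μ a| ≤ |μ (a ⊓ dᶜ)| := by
  have hsplit := h.apply_eq_add_inf_compl a d
  rw [inf_eq_right.mpr hda] at hsplit
  calc |μ d| - |μ a| ≤ |μ a - μ d| := by rw [abs_sub_comm]; exact abs_sub_abs_le_abs_sub _ _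
    _ = |μ (a ⊓ dᶜ)| := by rw [hsplit, add_sub_cancel_left]

lemma ofReal_abs_add_abs_le_bvar {a p q : α} (hp : p ≤ a) (hq : q ≤ a) (hpq : p ⊓ q = ⊥) :
    ENNReal.ofReal (|μ p| + |μ q|) ≤ bvar μ a :=
  le_iSup_of_le ⟨⟨p, q⟩, hp, hq, hpq⟩ le_rfl

lemma bvar_mono {a b : α} (hab : a ≤ b) : bvar μ a ≤ bvar μ b :=
  iSup_le fun ⟨_, hp, hq, hpq⟩ => ofReal_abs_add_abs_le_bvar (hp.trans hab) (hq.trans hab) hpq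

lemma bvar_bot (h : FinAdd μ) : bvar μ ⊥ = 0 := by
  refine le_antisymm (iSup_le ?_) zero_le
  rintro ⟨⟨p, q⟩, hp, hq, -⟩
  simp only [Set.mem_Iic, le_bot_iff] at hp hq
  simp [hp, hq, h.map_bot]

lemma bvar_sup_le (h : FinAdd μ) (b c : α) : bvar μ (b ⊔ c) ≤ bvar μ b + bvar μ c := by
  refine iSup_le fun ⟨⟨p, q⟩, hp, hq, hpq⟩ => ?_
  simp only [Set.mem_Iic] at hp hq
  have hdisj : Disjoint p q := disjoint_iff.mpr hpq
  have hle_c : ∀ r : α, r ≤ b ⊔ c → r ⊓ bᶜ ≤ c := fun r hr => by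
    simpa [inf_sup_right] using inf_le_inf_right bᶜ hr
  have hp' := h.apply_eq_add_inf_compl p b
  have hq' := h.apply_eq_add_inf_compl q b
  calc ENNReal.ofReal (|μ p| + |μ q|)
      ≤ ENNReal.ofReal ((|μ (p ⊓ b)| + |μ (q ⊓ b)|) + (|μ (p ⊓ bᶜ)| + |μ (q ⊓ bᶜ)|)) := by
        refine ENNReal.ofReal_le_ofReal ?_
        rw [hp', hq']
        linarith [abs_add_le (μ (p ⊓ b)) (μ (p ⊓ bᶜ)), abs_add_le (μ (q ⊓ b)) (μ (q ⊓ bᶜ))]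
    _ = ENNReal.ofReal (|μ (p ⊓ b)| + |μ (q ⊓ b)|)
        + ENNReal.ofReal (|μ (p ⊓ bᶜ)| + |μ (q ⊓ bᶜ)|) :=
        ENNReal.ofReal_add (by positivity) (by positivity)
    _ ≤ bvar μ b + bvar μ c :=
        add_le_add
          (ofReal_abs_add_abs_le_bvar inf_le_right inf_le_right
            (hdisj.mono inf_le_left inf_le_left).eq_bot)
          (ofReal_abs_add_abs_le_bvar (hle_c p hp) (hle_c q hq)
            (hdisj.mono inf_le_left inf_le_left).eq_bot)

lemma bvar_finset_sup_le (h : FinAdd μ) {ι : Type*} (s : Finset ι) (f : ι → α) :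
    bvar μ (s.sup f) ≤ ∑ i ∈ s, bvar μ (f i) := by
  classical
  induction s using Finset.cons_induction with
  | empty => simp [bvar_bot h]
  | cons i s _ ih =>
    rw [Finset.sup_cons, Finset.sum_cons]
    exact (bvar_sup_le h _ _).trans (add_le_add le_rfl ih)

lemma iSup_bvar_finset_sup_ne_top {ι : Type*} {μ : ι → α → ℝ} (hadd : ∀ i, FinAdd (μ i))
    (s : Finset α) (hs : ∀ b ∈ s, ⨆ i, bvar (μ i) b ≠ ⊤) :
    ⨆ i, bvar (μ i) (s.sup id) ≠ ⊤ :=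
  ne_top_of_le_ne_top (ENNReal.sum_ne_top.mpr hs) <| iSup_le fun i =>
    (bvar_finset_sup_le (hadd i) s id).trans
      (Finset.sum_le_sum fun b _ => le_iSup (fun j => bvar (μ j) b) i)

lemma exists_le_lt_abs_of_ofReal_two_mul_lt_bvar {a : α} {c : ℝ}
    (h : ENNReal.ofReal (2 * c) < bvar μ a) : ∃ d ≤ a, c < |μ d| := by
  obtain ⟨⟨⟨p, q⟩, hp, hq, _⟩, hpq⟩ := lt_iSup_iff.mp h
  have hsum : 2 * c < |μ p| + |μ q| := (ENNReal.ofReal_lt_ofReal_iff'.mp hpq).1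
  by_cases hpc : c < |μ p|
  · exact ⟨p, hp, hpc⟩
  · exact ⟨q, hq, by linarith⟩

end BooleanAlgebra

lemma ENNReal.frequently_lt_of_iSup_eq_top {f : ℕ → ℝ≥0∞} (hf : ∀ n, f n ≠ ⊤)
    (htop : ⨆ n, f n = ⊤) {K : ℝ≥0∞} (hK : K ≠ ⊤) : ∃ᶠ n in atTop, K < f n := by
  intro hev
  obtain ⟨n₀, hn₀⟩ := eventually_atTop.mp hev
  have hbound : ⨆ n, f n ≤ K ⊔ (Finset.range n₀).sup f := iSup_le fun n => by
    by_cases hn : n < n₀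
    · exact le_sup_of_le_right (Finset.le_sup (Finset.mem_range.mpr hn))
    · exact le_sup_of_le_left (not_lt.mp (hn₀ n (not_lt.mp hn)))
  have hfin : K ⊔ (Finset.range n₀).sup f < ⊤ :=
    sup_lt_iff.mpr ⟨hK.lt_top, (Finset.sup_lt_iff ENNReal.zero_lt_top).mpr fun n _ => (hf n).lt_top⟩
  exact (htop ▸ hbound).not_gt hfin

namespace StoneRep

variable {S : Type*} [BooleanAlgebra α] [TopologicalSpace S] (R : StoneRep α S)

lemma le_iff_subset {a b : α} : a ≤ b ↔ R.e a ⊆ R.e b := by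
  rw [← inf_eq_left, ← Set.inter_eq_left, ← R.map_inf, R.injective.eq_iff]

lemma exists_finset_le_sup [CompactSpace S] {P : α → Prop} {a : α}
    (h : ∀ x ∈ R.e a, ∃ b, x ∈ R.e b ∧ P b) : ∃ s : Finset α, (∀ b ∈ s, P b) ∧ a ≤ s.sup id := by
  have hcover : R.e a ⊆ ⋃ b ∈ {b | P b}, R.e b := fun x hx => by
    obtain ⟨b, hxb, hb⟩ := h x hx
    exact Set.mem_biUnion hb hxb
  obtain ⟨s, hsP, hs, hcov⟩ := (R.isClopen a).isClosed.isCompact.elim_finite_subcover_image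
    (fun b _ => (R.isClopen b).isOpen) hcover
  refine ⟨hs.toFinset, fun b hb => hsP (hs.mem_toFinset.mp hb), (R.le_iff_subset).mpr ?_⟩
  exact hcov.trans <| Set.iUnion₂_subset fun b hb =>
    (R.le_iff_subset).mp (Finset.le_sup (f := id) (hs.mem_toFinset.mpr hb))

end StoneRep

theorem stmt_3_general {α S : Type*} [BooleanAlgebra α] [TopologicalSpace S] [CompactSpace S]
    [MeasurableSpace S]
    (R : StoneRep α S) (μ : ℕ → α → ℝ)
    (hadd : ∀ n, FinAdd (μ n)) (hbdd : ∀ n, bvar (μ n) ⊤ ≠ ⊤)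
    (hpt : ∀ a : α, Tendsto (fun n => μ n a) atTop (nhds 0))
    (μhat : ℕ → MeasureTheory.SignedMeasure S)
    (hext : ∀ n a, μhat n (R.e a) = μ n a)
    (t : S)
    (ht : ∀ a : α, t ∈ R.e a → (⨆ n, bvar (μ n) a) = ⊤)
    (huniq : ∀ x : S, (∀ a : α, x ∈ R.e a → (⨆ n, bvar (μ n) a) = ⊤) → x = t) :
    ∀ (N : ℕ) (a : α), t ∈ R.e a →
      ∃ U : Set S, IsClopen U ∧ U ⊆ R.e a ∧ t ∉ U ∧
        ∃ n : ℕ, (N : ℝ) * ((bvar (μ n) aᶜ).toReal + 1) < |μhat n U| := by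
  intro N a hta
  have hcompl : ⨆ n, bvar (μ n) aᶜ ≠ ⊤ := by
    obtain ⟨s, hs, hle⟩ := R.exists_finset_le_sup (P := fun b => ⨆ n, bvar (μ n) b ≠ ⊤)
      (a := aᶜ) fun x hx => by
        rw [R.map_compl] at hx
        by_contra! hx_conc
        exact hx (huniq x hx_conc ▸ hta)
    exact ne_top_of_le_ne_top (iSup_bvar_finset_sup_ne_top hadd s hs)
      (iSup_mono fun n => bvar_mono hle)
  set M : ℝ := N * ((⨆ n, bvar (μ n) aᶜ).toReal + 1)
  have hsmall : ∀ᶠ n in atTop, |μ n a| < 1 := by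
    simpa using (hpt a).abs.eventually (gt_mem_nhds (by simp))
  have hlarge : ∃ᶠ n in atTop, ENNReal.ofReal (2 * (M + 1)) < bvar (μ n) a :=
    ENNReal.frequently_lt_of_iSup_eq_top (fun n => ne_top_of_le_ne_top (hbdd n) (bvar_mono le_top))
      (ht a hta) ENNReal.ofReal_ne_top
  obtain ⟨n, hn_large, hn_small⟩ := (hlarge.and_eventually hsmall).exists
  obtain ⟨d, hda, hd⟩ := exists_le_lt_abs_of_ofReal_two_mul_lt_bvar hn_large
  have hM : (N : ℝ) * ((bvar (μ n) aᶜ).toReal + 1) ≤ M := by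
    show _ ≤ (N : ℝ) * (_ + 1)
    gcongr
    exact le_iSup (fun m => bvar (μ m) aᶜ) n
  by_cases htd : t ∈ R.e d
  · refine ⟨R.e (a ⊓ dᶜ), R.isClopen _, (R.le_iff_subset).mp inf_le_left, ?_, n, ?_⟩
    · rw [R.map_inf, R.map_compl]
      exact fun ht' => ht'.2 htd
    · rw [hext]
      linarith [(hadd n).abs_sub_abs_le_abs_inf_compl hda]
  · refine ⟨R.e d, R.isClopen _, (R.le_iff_subset).mp hda, htd, n, ?_⟩
    rw [hext]
    linarith

/-- If an anti-Nikodym sequence `(μ_n)` on a Boolean algebra has a unique Nikodym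
concentration point `t` in the Stone space, then `t` is a strong Nikodym concentration
point of `(μ_n)`. -/
theorem stmt_3 {α S : Type*} [BooleanAlgebra α] [TopologicalSpace S] [CompactSpace S]
    [T2Space S] [TotallyDisconnectedSpace S] [MeasurableSpace S] [BorelSpace S]
    (R : StoneRep α S) (μ : ℕ → α → ℝ)
    (hadd : ∀ n, FinAdd (μ n)) (hbdd : ∀ n, bvar (μ n) ⊤ ≠ ⊤)
    (hpt : ∀ a : α, Tendsto (fun n => μ n a) atTop (nhds 0))
    (hub : (⨆ n, bvar (μ n) ⊤) = ⊤)
    (μhat : ℕ → MeasureTheory.SignedMeasure S)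
    (hext : ∀ n a, μhat n (R.e a) = μ n a)
    (hreg : ∀ n, ((μhat n).totalVariation).Regular)
    (t : S)
    (ht : ∀ a : α, t ∈ R.e a → (⨆ n, bvar (μ n) a) = ⊤)
    (huniq : ∀ x : S, (∀ a : α, x ∈ R.e a → (⨆ n, bvar (μ n) a) = ⊤) → x = t) :
    ∀ (N : ℕ) (a : α), t ∈ R.e a →
      ∃ U : Set S, IsClopen U ∧ U ⊆ R.e a ∧ t ∉ U ∧
        ∃ n : ℕ, (N : ℝ) * ((bvar (μ n) aᶜ).toReal + 1) < |μhat n U| :=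
  stmt_3_general R μ hadd hbdd hpt μhat hext t ht huniq
end

section
/- Let A be an infinite Boolean algebra and I an ideal in A. The map (μ, α) ↦ T_α(μ), where T_α(μ)(A) = μ(A) for A ∈ I and T_α(μ)(A) = −μ(Aᶜ) + α for A ∈ I*, is a bounded linear bijection (hence a Banach space isomorphism) from ba(I) ⊕ ℝ (with the sum norm) onto ba(A⟨I⟩), with operator norm at most 2. -/
open Filter
open scoped ENNReal

variable {α : Type*}

/-- Finite additivity on the subfamily `s`. -/
def FinAddOn [BooleanAlgebra α] (s : Set α) (μ : α → ℝ) : Prop :=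
  ∀ a b : α, a ∈ s → b ∈ s → a ⊓ b = ⊥ → μ (a ⊔ b) = μ a + μ b

/-- The subalgebra `A⟨I⟩ = I ∪ I*` of `α` generated by the ideal `I`. -/
def genSet [BooleanAlgebra α] (I : Order.Ideal α) : Set α := {a : α | a ∈ I ∨ aᶜ ∈ I}

open Classical in
/-- The extension `T_c(μ)` of a measure `μ ∈ ba(I)` to `A⟨I⟩`:
`T_c(μ)(a) = μ(a)` if `a ∈ I`, and `T_c(μ)(a) = -μ(aᶜ) + c` otherwise. -/
noncomputable def extMap [BooleanAlgebra α] (I : Order.Ideal α) (μ : α → ℝ) (c : ℝ) :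
    α → ℝ :=
  fun a => if a ∈ I then μ a else -μ aᶜ + c

/-!
Additivity forces `ν a = ν ⊤ - ν aᶜ` on `I*` for every `ν ∈ ba(A⟨I⟩)`, so `ν` is determined
by `(ν ↾ I, ν ⊤)` and `T` inverts this map; properness of `I` makes `T_c(μ)(⊤) = c`, which
gives injectivity. Additivity of `T_c(μ)` on a pair `a ∈ I`, `b ∈ I*` is additivity of `μ` on
the decomposition `bᶜ = a ⊔ (bᶜ \ a)`, and the norm bound holds because
`|T_c(μ)(a)| ≤ ‖μ‖ + |c|` for every `a ∈ A⟨I⟩`.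
-/

section

variable [BooleanAlgebra α] {μ : α → ℝ} {s t : Set α} {a b : α}

lemma svar_le {C : ℝ≥0∞}
    (h : ∀ a b : α, a ∈ s → b ∈ s → a ⊓ b = ⊥ → ENNReal.ofReal (|μ a| + |μ b|) ≤ C) :
    svar μ s ≤ C :=
  iSup_le fun ⟨⟨a, b⟩, ha, hb, hab⟩ => h a b ha hb hab

lemma le_svar (ha : a ∈ s) (hb : b ∈ s) (hab : a ⊓ b = ⊥) :
    ENNReal.ofReal (|μ a| + |μ b|) ≤ svar μ s :=
  le_iSup (fun p : {p : α × α // p.1 ∈ s ∧ p.2 ∈ s ∧ p.1 ⊓ p.2 = ⊥} =>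
    ENNReal.ofReal (|μ p.1.1| + |μ p.1.2|)) ⟨(a, b), ha, hb, hab⟩

lemma svar_mono (hst : s ⊆ t) : svar μ s ≤ svar μ t :=
  svar_le fun _ _ ha hb hab => le_svar (hst ha) (hst hb) hab

lemma ofReal_abs_le_svar (ha : a ∈ s) (hbot : ⊥ ∈ s) : ENNReal.ofReal |μ a| ≤ svar μ s :=
  (ENNReal.ofReal_le_ofReal (le_add_of_nonneg_right (abs_nonneg (μ ⊥)))).trans
    (le_svar ha hbot (inf_bot_eq a))

lemma FinAddOn.mono (hμ : FinAddOn t μ) (hst : s ⊆ t) : FinAddOn s μ :=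
  fun a b ha hb hab => hμ a b (hst ha) (hst hb) hab

lemma FinAddOn.map_bot (hμ : FinAddOn s μ) (hbot : ⊥ ∈ s) : μ ⊥ = 0 := by
  have h := hμ ⊥ ⊥ hbot hbot (bot_inf_eq ⊥)
  rw [bot_sup_eq] at h
  linarith

lemma FinAddOn.map_sdiff {I : Order.Ideal α} (hμ : FinAddOn (I : Set α) μ) (hb : b ∈ I)
    (hab : a ≤ b) : μ (b \ a) = μ b - μ a := by
  have h := hμ a (b \ a) (I.lower hab hb) (I.lower sdiff_le hb) inf_sdiff_self_right
  rw [sup_sdiff_cancel_right hab] at h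
  linarith

end

namespace Order.Ideal

variable [BooleanAlgebra α] {I : Order.Ideal α} {a b : α}

lemma notMem_of_compl_mem (hI : ⊤ ∉ I) (ha : aᶜ ∈ I) : a ∉ I := fun h =>
  hI (sup_compl_eq_top (x := a) ▸ I.sup_mem h ha)

lemma not_compl_mem_of_inf_eq_bot (hI : ⊤ ∉ I) (hab : a ⊓ b = ⊥) (ha : aᶜ ∈ I) :
    bᶜ ∉ I := fun hb =>
  hI (by simpa [← compl_inf, hab] using I.sup_mem ha hb)

lemma top_mem_genSet : ⊤ ∈ genSet I := Or.inr (by simp)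

end Order.Ideal

section extMap

open Order.Ideal

variable [BooleanAlgebra α] {I : Order.Ideal α} {μ : α → ℝ} {c : ℝ} {a b : α}

lemma extMap_of_mem (ha : a ∈ I) : extMap I μ c a = μ a := if_pos ha

lemma extMap_of_compl_mem (hI : ⊤ ∉ I) (ha : aᶜ ∈ I) : extMap I μ c a = c - μ aᶜ := by
  rw [extMap, if_neg (notMem_of_compl_mem hI ha)]
  ring

lemma extMap_top (hI : ⊤ ∉ I) (hμ : FinAddOn (I : Set α) μ) : extMap I μ c ⊤ = c := by
  rw [extMap_of_compl_mem hI (by simp), compl_top, hμ.map_bot I.bot_mem, sub_zero]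

lemma extMap_add (μ μ' : α → ℝ) (c c' : ℝ) (a : α) :
    extMap I (fun x => μ x + μ' x) (c + c') a = extMap I μ c a + extMap I μ' c' a := by
  unfold extMap
  split_ifs <;> ring

lemma extMap_smul (μ : α → ℝ) (c r : ℝ) (a : α) :
    extMap I (fun x => r * μ x) (r * c) a = r * extMap I μ c a := by
  unfold extMap
  split_ifs <;> ring

lemma extMap_sup_of_mem_of_compl_mem (hI : ⊤ ∉ I) (hμ : FinAddOn (I : Set α) μ) (ha : a ∈ I)
    (hb : bᶜ ∈ I) (hab : a ⊓ b = ⊥) :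
    extMap I μ c (a ⊔ b) = extMap I μ c a + extMap I μ c b := by
  have hle : a ≤ bᶜ := le_compl_iff_disjoint_right.2 (disjoint_iff.2 hab)
  have hcompl : (a ⊔ b)ᶜ = bᶜ \ a := by rw [compl_sup, sdiff_eq, inf_comm]
  have hmem : (a ⊔ b)ᶜ ∈ I := I.lower (hcompl ▸ sdiff_le) hb
  rw [extMap_of_compl_mem hI hmem, extMap_of_compl_mem hI hb, extMap_of_mem ha, hcompl,
    hμ.map_sdiff hb hle]
  ring

lemma finAddOn_extMap (hI : ⊤ ∉ I) (hμ : FinAddOn (I : Set α) μ) :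
    FinAddOn (genSet I) (extMap I μ c) := by
  rintro a b (ha | ha) (hb | hb) hab
  · rw [extMap_of_mem (I.sup_mem ha hb), extMap_of_mem ha, extMap_of_mem hb]
    exact hμ a b ha hb hab
  · exact extMap_sup_of_mem_of_compl_mem hI hμ ha hb hab
  · rw [sup_comm, add_comm]
    exact extMap_sup_of_mem_of_compl_mem hI hμ hb ha (inf_comm a b ▸ hab)
  · exact absurd hb (not_compl_mem_of_inf_eq_bot hI hab ha)

lemma ofReal_abs_extMap_le (ha : a ∈ genSet I) :
    ENNReal.ofReal |extMap I μ c a| ≤ svar μ (I : Set α) + ENNReal.ofReal |c| := by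
  have hbot : (⊥ : α) ∈ (I : Set α) := I.bot_mem
  by_cases haI : a ∈ I
  · rw [extMap_of_mem haI]
    exact le_add_right (ofReal_abs_le_svar haI hbot)
  · have hac : aᶜ ∈ (I : Set α) := ha.resolve_left haI
    calc ENNReal.ofReal |extMap I μ c a| = ENNReal.ofReal |-μ aᶜ + c| := by
          rw [extMap, if_neg haI]
      _ ≤ ENNReal.ofReal (|μ aᶜ| + |c|) :=
          ENNReal.ofReal_le_ofReal ((abs_add_le _ _).trans_eq (by rw [abs_neg]))
      _ ≤ ENNReal.ofReal |μ aᶜ| + ENNReal.ofReal |c| := ENNReal.ofReal_add_le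
      _ ≤ svar μ (I : Set α) + ENNReal.ofReal |c| :=
          add_le_add_left (ofReal_abs_le_svar hac hbot) _

lemma svar_extMap_le :
    svar (extMap I μ c) (genSet I) ≤ 2 * (svar μ (I : Set α) + ENNReal.ofReal |c|) :=
  svar_le fun _ _ ha hb _ => calc
    _ ≤ ENNReal.ofReal |extMap I μ c _| + ENNReal.ofReal |extMap I μ c _| :=
        ENNReal.ofReal_add_le
    _ ≤ _ := (add_le_add (ofReal_abs_extMap_le ha) (ofReal_abs_extMap_le hb)).trans_eq
        (two_mul _).symm

lemma svar_extMap_ne_top (h : svar μ (I : Set α) ≠ ⊤) : svar (extMap I μ c) (genSet I) ≠ ⊤ :=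
  ne_top_of_le_ne_top (ENNReal.mul_ne_top ENNReal.ofNat_ne_top
    (ENNReal.add_ne_top.2 ⟨h, ENNReal.ofReal_ne_top⟩)) svar_extMap_le

lemma extMap_self_top {ν : α → ℝ} (hν : FinAddOn (genSet I) ν) (ha : a ∈ genSet I) :
    extMap I ν (ν ⊤) a = ν a := by
  by_cases haI : a ∈ I
  · exact extMap_of_mem haI
  · have h := hν a aᶜ ha (Or.inl (ha.resolve_left haI)) inf_compl_eq_bot
    rw [sup_compl_eq_top] at h
    rw [extMap, if_neg haI]
    linarith

end extMap

theorem stmt_7_general [BooleanAlgebra α] (I : Order.Ideal α)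
    (hproper : (⊤ : α) ∉ I) :
    -- well-definedness: `T_c(μ)` lies in `ba(A⟨I⟩)`
    (∀ (μ : α → ℝ) (c : ℝ), FinAddOn (I : Set α) μ → svar μ (I : Set α) ≠ ⊤ →
        FinAddOn (genSet I) (extMap I μ c) ∧ svar (extMap I μ c) (genSet I) ≠ ⊤) ∧
    -- additivity
    (∀ (μ μ' : α → ℝ) (c c' : ℝ) (a : α),
        extMap I (fun x => μ x + μ' x) (c + c') a = extMap I μ c a + extMap I μ' c' a) ∧
    -- homogeneity
    (∀ (μ : α → ℝ) (c r : ℝ) (a : α),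
        extMap I (fun x => r * μ x) (r * c) a = r * extMap I μ c a) ∧
    -- injectivity
    (∀ (μ μ' : α → ℝ) (c c' : ℝ), FinAddOn (I : Set α) μ → FinAddOn (I : Set α) μ' →
        (∀ a ∈ genSet I, extMap I μ c a = extMap I μ' c' a) →
        c = c' ∧ ∀ a ∈ I, μ a = μ' a) ∧
    -- surjectivity onto `ba(A⟨I⟩)`
    (∀ ν : α → ℝ, FinAddOn (genSet I) ν → svar ν (genSet I) ≠ ⊤ →
        ∃ (μ : α → ℝ) (c : ℝ), FinAddOn (I : Set α) μ ∧ svar μ (I : Set α) ≠ ⊤ ∧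
          ∀ a ∈ genSet I, extMap I μ c a = ν a) ∧
    -- operator norm at most 2
    (∀ (μ : α → ℝ) (c : ℝ), FinAddOn (I : Set α) μ → svar μ (I : Set α) ≠ ⊤ →
        svar (extMap I μ c) (genSet I) ≤ 2 * (svar μ (I : Set α) + ENNReal.ofReal |c|)) := by
  have hI_sub : (I : Set α) ⊆ genSet I := fun _ => Or.inl
  refine ⟨fun μ c hμ hfin => ⟨finAddOn_extMap hproper hμ, svar_extMap_ne_top hfin⟩,
    extMap_add, extMap_smul, ?_, ?_, fun μ c _ _ => svar_extMap_le⟩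
  · intro μ μ' c c' hμ hμ' heq
    refine ⟨?_, fun a ha => ?_⟩
    · simpa only [extMap_top hproper hμ, extMap_top hproper hμ'] using
        heq ⊤ Order.Ideal.top_mem_genSet
    · simpa only [extMap_of_mem ha] using heq a (hI_sub ha)
  · intro ν hν hfin
    exact ⟨ν, ν ⊤, hν.mono hI_sub, ne_top_of_le_ne_top hfin (svar_mono hI_sub),
      fun a ha => extMap_self_top hν ha⟩

/-- The map `(μ, c) ↦ T_c(μ)` is a linear bijection from `ba(I) ⊕ ℝ` onto `ba(A⟨I⟩)`
with operator norm at most `2` (hence a Banach space isomorphism). -/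
theorem stmt_7 [BooleanAlgebra α] [Infinite α] (I : Order.Ideal α)
    (hproper : (⊤ : α) ∉ I) :
    -- well-definedness: `T_c(μ)` lies in `ba(A⟨I⟩)`
    (∀ (μ : α → ℝ) (c : ℝ), FinAddOn (I : Set α) μ → svar μ (I : Set α) ≠ ⊤ →
        FinAddOn (genSet I) (extMap I μ c) ∧ svar (extMap I μ c) (genSet I) ≠ ⊤) ∧
    -- additivity
    (∀ (μ μ' : α → ℝ) (c c' : ℝ) (a : α),
        extMap I (fun x => μ x + μ' x) (c + c') a = extMap I μ c a + extMap I μ' c' a) ∧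
    -- homogeneity
    (∀ (μ : α → ℝ) (c r : ℝ) (a : α),
        extMap I (fun x => r * μ x) (r * c) a = r * extMap I μ c a) ∧
    -- injectivity
    (∀ (μ μ' : α → ℝ) (c c' : ℝ), FinAddOn (I : Set α) μ → FinAddOn (I : Set α) μ' →
        (∀ a ∈ genSet I, extMap I μ c a = extMap I μ' c' a) →
        c = c' ∧ ∀ a ∈ I, μ a = μ' a) ∧
    -- surjectivity onto `ba(A⟨I⟩)`
    (∀ ν : α → ℝ, FinAddOn (genSet I) ν → svar ν (genSet I) ≠ ⊤ →
        ∃ (μ : α → ℝ) (c : ℝ), FinAddOn (I : Set α) μ ∧ svar μ (I : Set α) ≠ ⊤ ∧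
          ∀ a ∈ genSet I, extMap I μ c a = ν a) ∧
    -- operator norm at most 2
    (∀ (μ : α → ℝ) (c : ℝ), FinAddOn (I : Set α) μ → svar μ (I : Set α) ≠ ⊤ →
        svar (extMap I μ c) (genSet I) ≤ 2 * (svar μ (I : Set α) + ENNReal.ofReal |c|)) :=
  stmt_7_general I hproper
end
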